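/- Let w, t, u, v ∈ Q and let 1 ≤ i, k, r, p ≤ m with i ≠ k and r ≠ p. Then the four-fold commutator [[E_{i,w}, E_{k,t}], [E_{r,u}, E*_{p,v}]] acts on M as follows: (1) if i = p, it sends (z,x,f) to (z, x + f(x_r)·⟨v,u⟩·⟨t,w⟩·x_k − f(x_k)·⟨w,t⟩·⟨u,v⟩·x_r, f) (which is the identity when moreover k = r); (2) if k = p, it sends (z,x,f) to (z, x − f(x_r)·⟨v,u⟩·⟨w,t⟩·x_i + f(x_i)·⟨t,w⟩·⟨u,v⟩·x_r, f) (which is the identity when moreover i = r); (3) if i ≠ p and k ≠ p, it is the identity automorphism of M. -/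

import Mathlib

/-!
Both inner commutators are shears of `M = Q × P × P*`: `[E_{i,w}, E_{k,t}]` fixes `z` and `f` and
adds `φ f` to `x`, while for `r ≠ p` the commutator `[E_{r,u}, E*_{p,v}]` fixes `z` and acts by
`(x, f) ↦ (x + ψ x, f + χ f)` with `ψ² = χ² = 0`. The commutator of two such shears fixes `z` and
`f` and adds `φ (χ f) - ψ (φ f) + ψ (φ (χ f))` to `x`. Here `ψ ∘ φ ∘ χ = 0` because `i ≠ k`, and
the Kronecker deltas left in the other two terms separate the cases `p = i`, `p = k` and
`p ∉ {i, k}`.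
-/

open QuadraticMap
open scoped commutatorElement

/-- The DSER elementary orthogonal transformation `E_{i,w}` on `M = Q ⊕ P ⊕ P*`,
`P = A^m`:  `E_{i,w}(z,x,f) = (z − f(xᵢ)•w, x + ⟨w,z⟩•xᵢ − f(xᵢ)·q(w)•xᵢ, f)`. -/
noncomputable def Eplus {A Q : Type*} [CommRing A] [AddCommGroup Q] [Module A Q]
    {m : ℕ} (q : QuadraticForm A Q) (i : Fin m) (w : Q) :
    (Q × (Fin m → A) × (Fin m → A)) ≃ₗ[A] (Q × (Fin m → A) × (Fin m → A)) where
  toFun p := (p.1 - p.2.2 i • w,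
    p.2.1 + polar ⇑q w p.1 • (Pi.single i 1 : Fin m → A)
      - (p.2.2 i * q w) • (Pi.single i 1 : Fin m → A),
    p.2.2)
  invFun p := (p.1 + p.2.2 i • w,
    p.2.1 - polar ⇑q w p.1 • (Pi.single i 1 : Fin m → A)
      - (p.2.2 i * q w) • (Pi.single i 1 : Fin m → A),
    p.2.2)
  map_add' p p' := by
    obtain ⟨z, x, f⟩ := p
    obtain ⟨z', x', f'⟩ := p'
    refine Prod.ext ?_ (Prod.ext ?_ rfl)
    · show z + z' - (f i + f' i) • w = (z - f i • w) + (z' - f' i • w)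
      module
    · show x + x' + polar ⇑q w (z + z') • (Pi.single i 1 : Fin m → A)
        - ((f i + f' i) * q w) • (Pi.single i 1 : Fin m → A) = _
      rw [polar_add_right]
      show _ = (x + polar ⇑q w z • (Pi.single i 1 : Fin m → A) - (f i * q w) • (Pi.single i 1 : Fin m → A))
        + (x' + polar ⇑q w z' • (Pi.single i 1 : Fin m → A) - (f' i * q w) • (Pi.single i 1 : Fin m → A))
      module
  map_smul' a p := by
    obtain ⟨z, x, f⟩ := p
    refine Prod.ext ?_ (Prod.ext ?_ rfl)
    · show a • z - (a • f) i • w = a • (z - f i • w)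
      simp only [Pi.smul_apply, smul_eq_mul]
      module
    · show a • x + polar ⇑q w (a • z) • (Pi.single i 1 : Fin m → A)
        - ((a • f) i * q w) • (Pi.single i 1 : Fin m → A)
        = a • (x + polar ⇑q w z • (Pi.single i 1 : Fin m → A) - (f i * q w) • (Pi.single i 1 : Fin m → A))
      rw [polar_smul_right]
      simp only [Pi.smul_apply, smul_eq_mul]
      module
  left_inv p := by
    obtain ⟨z, x, f⟩ := p
    refine Prod.ext ?_ (Prod.ext ?_ rfl)
    · show z - f i • w + f i • w = z
      module
    · show x + polar ⇑q w z • (Pi.single i 1 : Fin m → A) - (f i * q w) • (Pi.single i 1 : Fin m → A)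
        - polar ⇑q w (z - f i • w) • (Pi.single i 1 : Fin m → A)
        - (f i * q w) • (Pi.single i 1 : Fin m → A) = x
      rw [polar_sub_right, polar_smul_right, polar_self]
      simp only [smul_eq_mul]
      module
  right_inv p := by
    obtain ⟨z, x, f⟩ := p
    refine Prod.ext ?_ (Prod.ext ?_ rfl)
    · show z + f i • w - f i • w = z
      module
    · show x - polar ⇑q w z • (Pi.single i 1 : Fin m → A) - (f i * q w) • (Pi.single i 1 : Fin m → A)
        + polar ⇑q w (z + f i • w) • (Pi.single i 1 : Fin m → A)
        - (f i * q w) • (Pi.single i 1 : Fin m → A) = x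
      rw [polar_add_right, polar_smul_right, polar_self]
      simp only [smul_eq_mul]
      module

/-- The DSER elementary orthogonal transformation `E*_{i,w}` on `M = Q ⊕ P ⊕ P*`:
`E*_{i,w}(z,x,f) = (z − fᵢ(x)•w, x, f + ⟨w,z⟩•fᵢ − fᵢ(x)·q(w)•fᵢ)`. -/
noncomputable def Estar {A Q : Type*} [CommRing A] [AddCommGroup Q] [Module A Q]
    {m : ℕ} (q : QuadraticForm A Q) (i : Fin m) (w : Q) :
    (Q × (Fin m → A) × (Fin m → A)) ≃ₗ[A] (Q × (Fin m → A) × (Fin m → A)) where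
  toFun p := (p.1 - p.2.1 i • w,
    p.2.1,
    p.2.2 + polar ⇑q w p.1 • (Pi.single i 1 : Fin m → A)
      - (p.2.1 i * q w) • (Pi.single i 1 : Fin m → A))
  invFun p := (p.1 + p.2.1 i • w,
    p.2.1,
    p.2.2 - polar ⇑q w p.1 • (Pi.single i 1 : Fin m → A)
      - (p.2.1 i * q w) • (Pi.single i 1 : Fin m → A))
  map_add' p p' := by
    obtain ⟨z, x, f⟩ := p
    obtain ⟨z', x', f'⟩ := p'
    refine Prod.ext ?_ (Prod.ext rfl ?_)
    · show z + z' - (x i + x' i) • w = (z - x i • w) + (z' - x' i • w)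
      module
    · show f + f' + polar ⇑q w (z + z') • (Pi.single i 1 : Fin m → A)
        - ((x i + x' i) * q w) • (Pi.single i 1 : Fin m → A) = _
      rw [polar_add_right]
      show _ = (f + polar ⇑q w z • (Pi.single i 1 : Fin m → A)
          - (x i * q w) • (Pi.single i 1 : Fin m → A))
        + (f' + polar ⇑q w z' • (Pi.single i 1 : Fin m → A)
          - (x' i * q w) • (Pi.single i 1 : Fin m → A))
      module
  map_smul' a p := by
    obtain ⟨z, x, f⟩ := p
    refine Prod.ext ?_ (Prod.ext rfl ?_)
    · show a • z - (a • x) i • w = a • (z - x i • w)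
      simp only [Pi.smul_apply, smul_eq_mul]
      module
    · show a • f + polar ⇑q w (a • z) • (Pi.single i 1 : Fin m → A)
        - ((a • x) i * q w) • (Pi.single i 1 : Fin m → A)
        = a • (f + polar ⇑q w z • (Pi.single i 1 : Fin m → A)
          - (x i * q w) • (Pi.single i 1 : Fin m → A))
      rw [polar_smul_right]
      simp only [Pi.smul_apply, smul_eq_mul]
      module
  left_inv p := by
    obtain ⟨z, x, f⟩ := p
    refine Prod.ext ?_ (Prod.ext rfl ?_)
    · show z - x i • w + x i • w = z
      module
    · show f + polar ⇑q w z • (Pi.single i 1 : Fin m → A)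
        - (x i * q w) • (Pi.single i 1 : Fin m → A)
        - polar ⇑q w (z - x i • w) • (Pi.single i 1 : Fin m → A)
        - (x i * q w) • (Pi.single i 1 : Fin m → A) = f
      rw [polar_sub_right, polar_smul_right, polar_self]
      simp only [smul_eq_mul]
      module
  right_inv p := by
    obtain ⟨z, x, f⟩ := p
    refine Prod.ext ?_ (Prod.ext rfl ?_)
    · show z + x i • w - x i • w = z
      module
    · show f - polar ⇑q w z • (Pi.single i 1 : Fin m → A)
        - (x i * q w) • (Pi.single i 1 : Fin m → A)
        + polar ⇑q w (z + x i • w) • (Pi.single i 1 : Fin m → A)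
        - (x i * q w) • (Pi.single i 1 : Fin m → A) = f
      rw [polar_add_right, polar_smul_right, polar_self]
      simp only [smul_eq_mul]
      module

section Shear

variable {R M P N : Type*} [Semiring R] [AddCommMonoid M] [AddCommGroup P] [AddCommGroup N]
  [Module R M] [Module R P] [Module R N]

theorem commutatorElement_shear_apply (g h : (M × P × N) ≃ₗ[R] (M × P × N))
    (φ : N →ₗ[R] P) (ψ : P →ₗ[R] P) (χ : N →ₗ[R] N)
    (hg : ∀ z x f, g (z, x, f) = (z, x + φ f, f))
    (hh : ∀ z x f, h (z, x, f) = (z, x + ψ x, f + χ f))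
    (hψ : ∀ x, ψ (ψ x) = 0) (hχ : ∀ f, χ (χ f) = 0) (z : M) (x : P) (f : N) :
    ⁅g, h⁆ (z, x, f) = (z, x + φ (χ f) - ψ (φ f) + ψ (φ (χ f)), f) := by
  have hg_inv : ∀ z x f, g⁻¹ (z, x, f) = (z, x - φ f, f) := fun z x f => by
    rw [LinearEquiv.coe_inv, LinearEquiv.symm_apply_eq, hg, sub_add_cancel]
  have hh_inv : ∀ z x f, h⁻¹ (z, x, f) = (z, x - ψ x, f - χ f) := fun z x f => by
    rw [LinearEquiv.coe_inv, LinearEquiv.symm_apply_eq, hh, map_sub, map_sub, hψ, hχ]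
    simp
  simp only [commutatorElement_def, LinearEquiv.mul_apply, hh_inv, hg_inv, hh, hg, map_add,
    map_sub, hψ, hχ, sub_zero, Prod.mk.injEq, true_and]
  constructor <;> abel

end Shear

section Elementary

variable {A Q : Type*} [CommRing A] [AddCommGroup Q] [Module A Q] {m : ℕ}
  (q : QuadraticForm A Q)

theorem Eplus_apply (i : Fin m) (w z : Q) (x f : Fin m → A) :
    Eplus q i w (z, x, f) =
      (z - f i • w, x + polar q w z • Pi.single i 1 - (f i * q w) • Pi.single i 1, f) :=
  rfl

theorem Eplus_inv_apply (i : Fin m) (w z : Q) (x f : Fin m → A) :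
    (Eplus q i w)⁻¹ (z, x, f) =
      (z + f i • w, x - polar q w z • Pi.single i 1 - (f i * q w) • Pi.single i 1, f) :=
  rfl

theorem Estar_apply (i : Fin m) (w z : Q) (x f : Fin m → A) :
    Estar q i w (z, x, f) =
      (z - x i • w, x, f + polar q w z • Pi.single i 1 - (x i * q w) • Pi.single i 1) :=
  rfl

theorem Estar_inv_apply (i : Fin m) (w z : Q) (x f : Fin m → A) :
    (Estar q i w)⁻¹ (z, x, f) =
      (z + x i • w, x, f - polar q w z • Pi.single i 1 - (x i * q w) • Pi.single i 1) :=
  rfl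

theorem commutatorElement_Eplus_Eplus_apply (i k : Fin m) (w t z : Q) (x f : Fin m → A) :
    ⁅Eplus q i w, Eplus q k t⁆ (z, x, f) =
      (z, x + ((f i * polar q t w) • Pi.single k 1 - (f k * polar q w t) • Pi.single i 1), f) := by
  simp only [commutatorElement_def, LinearEquiv.mul_apply, Eplus_inv_apply, Eplus_apply,
    polar_add_right, polar_sub_right, polar_smul_right, polar_self, smul_eq_mul, Prod.mk.injEq,
    and_true]
  constructor <;> module

theorem commutatorElement_Eplus_Estar_apply {r p : Fin m} (hrp : r ≠ p) (u v z : Q)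
    (x f : Fin m → A) :
    ⁅Eplus q r u, Estar q p v⁆ (z, x, f) =
      (z, x + -(x p * polar q u v) • Pi.single r 1, f + (f r * polar q v u) • Pi.single p 1) := by
  simp only [commutatorElement_def, LinearEquiv.mul_apply, Estar_inv_apply, Eplus_inv_apply,
    Estar_apply, Eplus_apply, Pi.add_apply, Pi.sub_apply, Pi.smul_apply,
    Pi.single_eq_of_ne hrp, Pi.single_eq_of_ne hrp.symm, smul_eq_mul, mul_zero, sub_zero,
    add_zero, polar_add_right, polar_sub_right, polar_smul_right, polar_self, Prod.mk.injEq]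
  refine ⟨?_, ?_, ?_⟩ <;> module

theorem fourfold_commutator_apply {i k r p : Fin m} (hik : i ≠ k) (hrp : r ≠ p)
    (w t u v z : Q) (x f : Fin m → A) :
    ⁅⁅Eplus q i w, Eplus q k t⁆, ⁅Eplus q r u, Estar q p v⁆⁆ (z, x, f) =
      (z, x + (f r * polar q v u) •
            (((Pi.single p 1 : Fin m → A) i * polar q t w) • Pi.single k 1
              - ((Pi.single p 1 : Fin m → A) k * polar q w t) • Pi.single i 1)
          + ((f i * polar q t w * (Pi.single k 1 : Fin m → A) p
              - f k * polar q w t * (Pi.single i 1 : Fin m → A) p) * polar q u v) • Pi.single r 1,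
        f) := by
  let φ : (Fin m → A) →ₗ[A] (Fin m → A) :=
    (LinearMap.proj i).smulRight (polar q t w • Pi.single k 1)
      - (LinearMap.proj k).smulRight (polar q w t • Pi.single i 1)
  let ψ : (Fin m → A) →ₗ[A] (Fin m → A) :=
    (LinearMap.proj p).smulRight (-polar q u v • Pi.single r 1)
  let χ : (Fin m → A) →ₗ[A] (Fin m → A) :=
    (LinearMap.proj r).smulRight (polar q v u • Pi.single p 1)
  have hg : ∀ z x f, ⁅Eplus q i w, Eplus q k t⁆ (z, x, f) = (z, x + φ f, f) := by
    intro z x f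
    simp [commutatorElement_Eplus_Eplus_apply, φ, smul_smul]
  have hh : ∀ z x f, ⁅Eplus q r u, Estar q p v⁆ (z, x, f) = (z, x + ψ x, f + χ f) := by
    intro z x f
    simp [commutatorElement_Eplus_Estar_apply q hrp, ψ, χ, smul_smul]
  have hψ : ∀ x, ψ (ψ x) = 0 := by simp [ψ, Pi.single_eq_of_ne hrp.symm]
  have hχ : ∀ f, χ (χ f) = 0 := by simp [χ, Pi.single_eq_of_ne hrp]
  have hψφχ : ∀ f, ψ (φ (χ f)) = 0 := by
    intro f
    rcases eq_or_ne p i with rfl | hpi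
    · simp [φ, ψ, χ, Pi.single_eq_of_ne hik, Pi.single_eq_of_ne hik.symm]
    · simp [φ, ψ, χ, Pi.single_eq_of_ne hpi, Pi.single_eq_of_ne hpi.symm]
  rw [commutatorElement_shear_apply _ _ φ ψ χ hg hh hψ hχ, hψφχ, add_zero]
  simp only [φ, ψ, χ, LinearMap.coe_smulRight, LinearMap.coe_proj, Function.eval, map_smul,
    LinearMap.sub_apply, neg_smul, Pi.sub_apply, Pi.smul_apply, smul_eq_mul, smul_neg,
    sub_neg_eq_add, Prod.mk.injEq, and_true, true_and]
  module

theorem fourfold_commutator_apply_left {i k r : Fin m} (hik : i ≠ k) (hri : r ≠ i)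
    (w t u v z : Q) (x f : Fin m → A) :
    ⁅⁅Eplus q i w, Eplus q k t⁆, ⁅Eplus q r u, Estar q i v⁆⁆ (z, x, f) =
      (z, x + (f r * polar q v u * polar q t w) • Pi.single k 1
        - (f k * polar q w t * polar q u v) • Pi.single r 1, f) := by
  rw [fourfold_commutator_apply q hik hri]
  simp only [Pi.single_eq_same, Pi.single_eq_of_ne hik, Pi.single_eq_of_ne hik.symm]
  congr 2
  module

theorem fourfold_commutator_apply_right {i k r : Fin m} (hik : i ≠ k) (hrk : r ≠ k)
    (w t u v z : Q) (x f : Fin m → A) :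
    ⁅⁅Eplus q i w, Eplus q k t⁆, ⁅Eplus q r u, Estar q k v⁆⁆ (z, x, f) =
      (z, x - (f r * polar q v u * polar q w t) • Pi.single i 1
        + (f i * polar q t w * polar q u v) • Pi.single r 1, f) := by
  rw [fourfold_commutator_apply q hik hrk]
  simp only [Pi.single_eq_same, Pi.single_eq_of_ne hik, Pi.single_eq_of_ne hik.symm]
  congr 2
  module

theorem fourfold_commutator_eq_one {i k r p : Fin m} (hik : i ≠ k) (hrp : r ≠ p) (hip : i ≠ p)
    (hkp : k ≠ p) (w t u v : Q) :
    ⁅⁅Eplus q i w, Eplus q k t⁆, ⁅Eplus q r u, Estar q p v⁆⁆ = 1 :=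
  LinearEquiv.ext fun ⟨z, x, f⟩ => by
    rw [fourfold_commutator_apply q hik hrp]
    simp [Pi.single_eq_of_ne hip, Pi.single_eq_of_ne hkp, Pi.single_eq_of_ne hip.symm,
      Pi.single_eq_of_ne hkp.symm]

end Elementary

theorem fourfold_commutator_EplusEplus_EplusEstar_general
    {A Q : Type*} [CommRing A] [AddCommGroup Q] [Module A Q]
    {m : ℕ} (q : QuadraticForm A Q) (i k r p : Fin m)
    (hik : i ≠ k) (hrp : r ≠ p) (w t u v : Q) :
    (i = p → ∀ (z : Q) (x f : Fin m → A),
      ⁅⁅Eplus q i w, Eplus q k t⁆, ⁅Eplus q r u, Estar q p v⁆⁆ (z, x, f)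
        = (z,
           x + (f r * polar ⇑q v u * polar ⇑q t w) • (Pi.single k 1 : Fin m → A)
             - (f k * polar ⇑q w t * polar ⇑q u v) • (Pi.single r 1 : Fin m → A),
           f)) ∧
    (i = p → k = r → ⁅⁅Eplus q i w, Eplus q k t⁆, ⁅Eplus q r u, Estar q p v⁆⁆ = 1) ∧
    (k = p → ∀ (z : Q) (x f : Fin m → A),
      ⁅⁅Eplus q i w, Eplus q k t⁆, ⁅Eplus q r u, Estar q p v⁆⁆ (z, x, f)
        = (z,
           x - (f r * polar ⇑q v u * polar ⇑q w t) • (Pi.single i 1 : Fin m → A)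
             + (f i * polar ⇑q t w * polar ⇑q u v) • (Pi.single r 1 : Fin m → A),
           f)) ∧
    (k = p → i = r → ⁅⁅Eplus q i w, Eplus q k t⁆, ⁅Eplus q r u, Estar q p v⁆⁆ = 1) ∧
    (i ≠ p → k ≠ p → ⁅⁅Eplus q i w, Eplus q k t⁆, ⁅Eplus q r u, Estar q p v⁆⁆ = 1) := by
  refine ⟨?_, ?_, ?_, ?_, fun hip hkp => fourfold_commutator_eq_one q hik hrp hip hkp w t u v⟩
  · rintro rfl
    exact fourfold_commutator_apply_left q hik hrp w t u v
  · rintro rfl rfl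
    refine LinearEquiv.ext fun ⟨z, x, f⟩ => ?_
    rw [fourfold_commutator_apply_left q hik hrp, polar_comm q v u, polar_comm q t w]
    simp [mul_right_comm]
  · rintro rfl
    exact fourfold_commutator_apply_right q hik hrp w t u v
  · rintro rfl rfl
    refine LinearEquiv.ext fun ⟨z, x, f⟩ => ?_
    rw [fourfold_commutator_apply_right q hik hrp, polar_comm q v u, polar_comm q t w]
    simp [mul_right_comm]

theorem fourfold_commutator_EplusEplus_EplusEstar
    {A Q : Type*} [CommRing A] [Invertible (2 : A)] [AddCommGroup Q] [Module A Q]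
    {m : ℕ} (q : QuadraticForm A Q) (i k r p : Fin m)
    (hik : i ≠ k) (hrp : r ≠ p) (w t u v : Q) :
    (i = p → ∀ (z : Q) (x f : Fin m → A),
      ⁅⁅Eplus q i w, Eplus q k t⁆, ⁅Eplus q r u, Estar q p v⁆⁆ (z, x, f)
        = (z,
           x + (f r * polar ⇑q v u * polar ⇑q t w) • (Pi.single k 1 : Fin m → A)
             - (f k * polar ⇑q w t * polar ⇑q u v) • (Pi.single r 1 : Fin m → A),
           f)) ∧
    (i = p → k = r → ⁅⁅Eplus q i w, Eplus q k t⁆, ⁅Eplus q r u, Estar q p v⁆⁆ = 1) ∧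
    (k = p → ∀ (z : Q) (x f : Fin m → A),
      ⁅⁅Eplus q i w, Eplus q k t⁆, ⁅Eplus q r u, Estar q p v⁆⁆ (z, x, f)
        = (z,
           x - (f r * polar ⇑q v u * polar ⇑q w t) • (Pi.single i 1 : Fin m → A)
             + (f i * polar ⇑q t w * polar ⇑q u v) • (Pi.single r 1 : Fin m → A),
           f)) ∧
    (k = p → i = r → ⁅⁅Eplus q i w, Eplus q k t⁆, ⁅Eplus q r u, Estar q p v⁆⁆ = 1) ∧
    (i ≠ p → k ≠ p → ⁅⁅Eplus q i w, Eplus q k t⁆, ⁅Eplus q r u, Estar q p v⁆⁆ = 1) :=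
  fourfold_commutator_EplusEplus_EplusEstar_general q i k r p hik hrp w t u v
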